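/- Let O be a discrete valuation ring with uniformizer π, valuation v and fraction field E, let σ be a ring involution of E with σ(O) = O, and let (V, h) be an n-dimensional hermitian space over (E, σ). Let U ⊆ J be two O-lattices in V such that π·U* = U (where U* is the dual lattice of U) and h(J, J) ⊆ O. Then for every orthogonal O-basis c₁, …, c_n of J (i.e. a basis with h(c_i, c_j) = 0 for i ≠ j), one has v(h(c_i, c_i)) ∈ {0, 1} for every i. -/

import Mathlib

open scoped Pointwise

/-!
Write `d = h(cᵢ, cᵢ)`; it lies in `O` because `h(J, J) ⊆ O`, and it is nonzero by
nondegeneracy, since `c` is an orthogonal basis of `V`. Orthogonality makes `d⁻¹ cᵢ` a vector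
of the dual lattice `J*`, and `J* ⊆ U* = π⁻¹ U ⊆ π⁻¹ J`. Hence `π d⁻¹ cᵢ ∈ J`, and reading off
the `i`-th coordinate in the basis `c` gives `π / d ∈ O`. So `d ∣ π` in `O`, and as `π` is
irreducible, `d` is a unit or `π` times a unit.
-/

section HermitianDual

variable {E V : Type*} [Field E] {σ : E →+* E} [AddCommGroup V] [Module E V]

def hermDual (h : V →ₗ[E] V →ₛₗ[σ] E) (O : Subring E) (L : Submodule O V) : Set V :=
  {x | ∀ l ∈ L, h x l ∈ O}

variable (h : V →ₗ[E] V →ₛₗ[σ] E) {O : Subring E}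

theorem hermDual_anti {L₁ L₂ : Submodule O V} (hL : L₁ ≤ L₂) :
    hermDual h O L₂ ⊆ hermDual h O L₁ :=
  fun _ hx l hl => hx l (hL hl)

theorem mem_hermDual_span_iff (hO : ∀ a ∈ O, σ a ∈ O) {S : Set V} {x : V} :
    x ∈ hermDual h O (Submodule.span O S) ↔ ∀ s ∈ S, h x s ∈ O := by
  refine ⟨fun hx s hs => hx s (Submodule.subset_span hs), fun hS l hl => ?_⟩
  induction hl using Submodule.span_induction with
  | mem s hs => exact hS s hs
  | zero => simp
  | add l₁ l₂ _ _ h₁ h₂ => simpa using O.add_mem h₁ h₂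
  | smul a l _ hl =>
    rw [Subring.smul_def, map_smulₛₗ, smul_eq_mul]
    exact O.mul_mem (hO a a.2) hl

theorem inv_apply_self_smul_mem_hermDual {ι : Type*} (hO : ∀ a ∈ O, σ a ∈ O) (c : ι → V)
    (horth : ∀ i j, i ≠ j → h (c i) (c j) = 0) {i : ι} (hi : h (c i) (c i) ≠ 0) :
    (h (c i) (c i))⁻¹ • c i ∈ hermDual h O (Submodule.span O (Set.range c)) := by
  rw [mem_hermDual_span_iff h hO]
  rintro _ ⟨j, rfl⟩
  rw [map_smul, LinearMap.smul_apply, smul_eq_mul]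
  rcases eq_or_ne i j with rfl | hij
  · simp [inv_mul_cancel₀ hi]
  · simp [horth i j hij]

theorem apply_self_ne_zero_of_orthogonal (h_nondeg : ∀ x : V, (∀ y : V, h x y = 0) → x = 0)
    {ι : Type*} {c : ι → V} (hspan : Submodule.span E (Set.range c) = ⊤)
    (horth : ∀ i j, i ≠ j → h (c i) (c j) = 0) {i : ι} (hi : c i ≠ 0) :
    h (c i) (c i) ≠ 0 := by
  intro hii
  have hker : Submodule.span E (Set.range c) ≤ LinearMap.ker (h (c i)) := by
    rw [Submodule.span_le]
    rintro _ ⟨j, rfl⟩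
    rcases eq_or_ne i j with rfl | hij
    · exact hii
    · exact horth i j hij
  rw [hspan, top_le_iff, LinearMap.ker_eq_top] at hker
  exact hi (h_nondeg _ fun y => by rw [hker]; rfl)

end HermitianDual

theorem mem_of_smul_mem_span {E V ι : Type*} [Field E] [AddCommGroup V] [Module E V] [Fintype ι]
    {O : Subring E} {c : ι → V} (hc : LinearIndependent E c) {a : E} {i : ι}
    (ha : a • c i ∈ Submodule.span O (Set.range c)) : a ∈ O := by
  classical
  obtain ⟨b, hb⟩ := (Submodule.mem_span_range_iff_exists_fun O).1 ha
  have hcoord := Fintype.linearIndependent_iffₛ.1 hc (fun j => (b j : E)) (Pi.single i a)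
    (by simpa [Subring.smul_def, Pi.single_apply] using hb) i
  simpa [hcoord] using (b i).2

theorem exists_isUnit_eq_or_eq_mul_of_dvd_irreducible {M : Type*} [CommMonoid M] {p d : M}
    (hp : Irreducible p) (hd : d ∣ p) : ∃ u : M, IsUnit u ∧ (d = u ∨ d = p * u) := by
  obtain hunit | ⟨u, hu⟩ := hp.dvd_iff.1 hd
  · exact ⟨d, hunit, Or.inl rfl⟩
  · exact ⟨u, u.isUnit, Or.inr hu.symm⟩

theorem stmt13 {E : Type*} [Field E] (σ : E →+* E)
    {V : Type*} [AddCommGroup V] [Module E V] [FiniteDimensional E V]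
    (h : V →ₗ[E] V →ₛₗ[σ] E)
    (h_nondeg : ∀ x : V, (∀ y : V, h x y = 0) → x = 0)
    (O : Subring E)
    (hO : ∀ a ∈ O, σ a ∈ O)
    (π : ↥O) (hπ : Irreducible π)
    (n : ℕ) (hn : Module.finrank E V = n)
    (U J : Submodule O V)
    (hUJ : U ≤ J)
    (hUdual : ((π : E) • {x : V | ∀ l ∈ U, h x l ∈ O}) = (U : Set V))
    (hJJ : ∀ x ∈ J, ∀ y ∈ J, h x y ∈ O)
    (c : Fin n → V) (hcind : LinearIndependent E c)
    (hcspan : Submodule.span O (Set.range c) = J)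
    (horth : ∀ i j : Fin n, i ≠ j → h (c i) (c j) = 0) :
    ∀ i : Fin n, ∃ u : ↥O, IsUnit u ∧
      (h (c i) (c i) = (u : E) ∨ h (c i) (c i) = (π : E) * (u : E)) := by
  intro i
  have hciJ : c i ∈ J := hcspan ▸ Submodule.subset_span ⟨i, rfl⟩
  set d := h (c i) (c i)
  have hdO : d ∈ O := hJJ _ hciJ _ hciJ
  have hd : d ≠ 0 := apply_self_ne_zero_of_orthogonal h h_nondeg
    (hcind.span_eq_top_of_card_eq_finrank' (by simp [hn])) horth (hcind.ne_zero i)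
  have hdual : d⁻¹ • c i ∈ hermDual h O U :=
    hermDual_anti h hUJ (hcspan ▸ inv_apply_self_smul_mem_hermDual h hO c horth hd)
  have hπdO : (π : E) * d⁻¹ ∈ O := by
    refine mem_of_smul_mem_span hcind (i := i) ?_
    rw [hcspan, mul_smul]
    refine hUJ ?_
    rw [← SetLike.mem_coe, ← hUdual]
    exact Set.smul_mem_smul_set hdual
  have hdvd : (⟨d, hdO⟩ : O) ∣ π :=
    ⟨⟨_, hπdO⟩, Subtype.ext (by simp [mul_left_comm, mul_inv_cancel₀ hd])⟩
  obtain ⟨u, hu, hdu⟩ := exists_isUnit_eq_or_eq_mul_of_dvd_irreducible hπ hdvd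
  exact ⟨u, hu, hdu.imp (congrArg Subtype.val) (congrArg Subtype.val)⟩
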